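/- Let F(v¹,…,vⁿ) be a smooth function on an open subset of ℝⁿ, let η be a constant symmetric invertible n×n matrix, and suppose the structure constants c^γ_{αβ} = η^{γε}∂_α∂_β∂_ε F satisfy the WDVV associativity equations c^ξ_{αβ}c^δ_{ξγ} = c^ξ_{γβ}c^δ_{ξα}. Define F̃(v⁰,v¹,…,vⁿ,v^{n+1}) = (1/2)(v⁰)²v^{n+1} + (1/2)v⁰·η_{αβ}v^αv^β + F(v¹,…,vⁿ), and let η̃ be the (n+2)×(n+2) matrix with η̃_{0,n+1} = η̃_{n+1,0} = 1, η̃_{αβ} = η_{αβ} for 1 ≤ α,β ≤ n, and all other entries zero. Then the structure constants c̃^k_{ij} = η̃^{kl}∂_i∂_j∂_l F̃ satisfy the WDVV associativity equations, and moreover c̃^k_{0j} = δ^k_j for all j, k (so ∂/∂v⁰ is the unit of the multiplication). -/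

import Mathlib

open scoped BigOperators

/-- Partial derivative `∂_i f` of a function on `Fin m → ℝ`. -/
noncomputable def pd {m : ℕ} (i : Fin m) (f : (Fin m → ℝ) → ℝ) (v : Fin m → ℝ) : ℝ :=
  fderiv ℝ f v (Pi.single i 1)

/-- Structure constants `c^γ_{αβ} = η^{γε}∂_α∂_β∂_ε F`. -/
noncomputable def structConst {m : ℕ} (η : Matrix (Fin m) (Fin m) ℝ)
    (F : (Fin m → ℝ) → ℝ) (γ α β : Fin m) (v : Fin m → ℝ) : ℝ :=
  ∑ ε, η⁻¹ γ ε * pd α (fun w => pd β (fun w' => pd ε F w') w) v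

/-- Embedding of the interior indices `1,…,n` into `Fin (n+2)`. -/
def interiorIdx {n : ℕ} (α : Fin n) : Fin (n + 2) := Fin.castSucc (Fin.succ α)

/-- The Mironov–Taimanov extended potential
`F̃ = (1/2)(v⁰)²v^{n+1} + (1/2)v⁰·η_{αβ}v^αv^β + F(v¹,…,vⁿ)`. -/
noncomputable def extF {n : ℕ} (η : Matrix (Fin n) (Fin n) ℝ) (F : (Fin n → ℝ) → ℝ)
    (w : Fin (n + 2) → ℝ) : ℝ :=
  (1 / 2) * (w 0) ^ 2 * w (Fin.last (n + 1)) +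
    (1 / 2) * w 0 * ∑ α, ∑ β, η α β * w (interiorIdx α) * w (interiorIdx β) +
    F fun α => w (interiorIdx α)

/-- The extended metric `η̃` with `η̃_{0,n+1} = η̃_{n+1,0} = 1`, `η̃_{αβ} = η_{αβ}` for
interior indices, and all other entries zero. -/
def extEta {n : ℕ} (η : Matrix (Fin n) (Fin n) ℝ) :
    Matrix (Fin (n + 2)) (Fin (n + 2)) ℝ :=
  Matrix.of fun i j =>
    if i.val = 0 then (if j.val = n + 1 then 1 else 0)
    else if i.val = n + 1 then (if j.val = 0 then 1 else 0)
    else if hj0 : j.val = 0 then 0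
    else if hjn : j.val = n + 1 then 0
    else if hi0 : i.val = 0 then 0
    else if hin : i.val = n + 1 then 0
    else η ⟨i.val - 1, by have := i.isLt; omega⟩ ⟨j.val - 1, by have := j.isLt; omega⟩

section pdlemmas

variable {m : ℕ} {f g : (Fin m → ℝ) → ℝ} {v : Fin m → ℝ} {i : Fin m}

/-- Kronecker delta. -/
def kd {m : ℕ} (a b : Fin m) : ℝ := if a = b then 1 else 0

lemma pd_add (hf : DifferentiableAt ℝ f v) (hg : DifferentiableAt ℝ g v) :
    pd i (fun w => f w + g w) v = pd i f v + pd i g v := by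
  unfold pd; rw [fderiv_fun_add hf hg]; simp

lemma pd_const (c : ℝ) : pd i (fun _ => c) v = 0 := by
  unfold pd; rw [fderiv_fun_const]; simp

lemma pd_const_mul (hf : DifferentiableAt ℝ f v) (c : ℝ) :
    pd i (fun w => c * f w) v = c * pd i f v := by
  unfold pd; rw [fderiv_const_mul hf c]; simp

lemma pd_mul (hf : DifferentiableAt ℝ f v) (hg : DifferentiableAt ℝ g v) :
    pd i (fun w => f w * g w) v = pd i f v * g v + f v * pd i g v := by
  unfold pd; rw [fderiv_fun_mul hf hg]; simp; ring

lemma pd_sum {ι : Type*} (s : Finset ι) (A : ι → (Fin m → ℝ) → ℝ)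
    (h : ∀ a ∈ s, DifferentiableAt ℝ (A a) v) :
    pd i (fun w => ∑ a ∈ s, A a w) v = ∑ a ∈ s, pd i (A a) v := by
  unfold pd; rw [fderiv_fun_sum h]; simp

lemma pd_proj (a : Fin m) : pd i (fun w => w a) v = kd a i := by
  have : (fun w : Fin m → ℝ => w a) = (ContinuousLinearMap.proj a :
      (Fin m → ℝ) →L[ℝ] ℝ) := rfl
  unfold pd; rw [this, ContinuousLinearMap.fderiv]
  simp [kd, Pi.single_apply]

lemma pd_contDiff (hf : ContDiff ℝ (⊤ : ℕ∞) f) (i : Fin m) : ContDiff ℝ (⊤ : ℕ∞) (pd i f) := by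
  have h1 : ContDiff ℝ (⊤ : ℕ∞) (fderiv ℝ f) := hf.fderiv_right (by simp)
  exact h1.clm_apply contDiff_const

lemma pd_comm (hf : ContDiff ℝ (⊤ : ℕ∞) f) (a b : Fin m) :
    pd a (fun w => pd b f w) v = pd b (fun w => pd a f w) v := by
  have hD : Differentiable ℝ (fderiv ℝ f) :=
    (hf.fderiv_right (m := (⊤ : ℕ∞)) (by simp)).differentiable (by simp)
  have key : ∀ (a b : Fin m),
      pd a (fun w => pd b f w) v
        = (fderiv ℝ (fderiv ℝ f) v (Pi.single a 1)) (Pi.single b 1) := by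
    intro a b
    unfold pd
    rw [fderiv_clm_apply (hD v) (differentiableAt_const _)]
    simp
  rw [key a b, key b a]
  have hsymm := second_derivative_symmetric
    (fun y => (hf.differentiable (by simp) y).hasFDerivAt)
    ((hD v).hasFDerivAt) (Pi.single a 1) (Pi.single b 1)
  exact hsymm

end pdlemmas

section pd3lemmas

variable {m : ℕ} {f g : (Fin m → ℝ) → ℝ} {x v : Fin m → ℝ} {i j l : Fin m}

/-- Third partial derivative. -/
noncomputable def pd3 {m : ℕ} (i j l : Fin m) (f : (Fin m → ℝ) → ℝ)
    (x : Fin m → ℝ) : ℝ :=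
  pd i (fun v => pd j (fun u => pd l f u) v) x

lemma pd3_add (hf : ContDiff ℝ (⊤ : ℕ∞) f) (hg : ContDiff ℝ (⊤ : ℕ∞) g) :
    pd3 i j l (fun w => f w + g w) x = pd3 i j l f x + pd3 i j l g x := by
  have hdf : Differentiable ℝ f := hf.differentiable (by simp)
  have hdg : Differentiable ℝ g := hg.differentiable (by simp)
  have h1 : (fun u => pd l (fun w => f w + g w) u) =
      fun u => pd l f u + pd l g u := funext fun u => pd_add (hdf u) (hdg u)
  have hdf1 : Differentiable ℝ (pd l f) := (pd_contDiff hf l).differentiable (by simp)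
  have hdg1 : Differentiable ℝ (pd l g) := (pd_contDiff hg l).differentiable (by simp)
  have h2 : (fun v => pd j (fun u => pd l f u + pd l g u) v) =
      fun v => pd j (fun u => pd l f u) v + pd j (fun u => pd l g u) v :=
    funext fun v => pd_add (hdf1 v) (hdg1 v)
  have hdf2 : Differentiable ℝ (pd j (pd l f)) :=
    (pd_contDiff (pd_contDiff hf l) j).differentiable (by simp)
  have hdg2 : Differentiable ℝ (pd j (pd l g)) :=
    (pd_contDiff (pd_contDiff hg l) j).differentiable (by simp)
  unfold pd3
  rw [h1, h2]
  exact pd_add (hdf2 x) (hdg2 x)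

lemma pd3_const_mul (hf : ContDiff ℝ (⊤ : ℕ∞) f) (c : ℝ) :
    pd3 i j l (fun w => c * f w) x = c * pd3 i j l f x := by
  have hdf : Differentiable ℝ f := hf.differentiable (by simp)
  have h1 : (fun u => pd l (fun w => c * f w) u) = fun u => c * pd l f u :=
    funext fun u => pd_const_mul (hdf u) c
  have hdf1 : Differentiable ℝ (pd l f) := (pd_contDiff hf l).differentiable (by simp)
  have h2 : (fun v => pd j (fun u => c * pd l f u) v) =
      fun v => c * pd j (fun u => pd l f u) v :=
    funext fun v => pd_const_mul (hdf1 v) c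
  have hdf2 : Differentiable ℝ (pd j (pd l f)) :=
    (pd_contDiff (pd_contDiff hf l) j).differentiable (by simp)
  unfold pd3
  rw [h1, h2]
  exact pd_const_mul (hdf2 x) c

lemma pd3_sum {ι : Type*} (s : Finset ι) (A : ι → (Fin m → ℝ) → ℝ)
    (h : ∀ a ∈ s, ContDiff ℝ (⊤ : ℕ∞) (A a)) :
    pd3 i j l (fun w => ∑ a ∈ s, A a w) x = ∑ a ∈ s, pd3 i j l (A a) x := by
  classical
  induction s using Finset.induction_on with
  | empty => simp [pd3, pd_const]
  | insert _ _ hni ih =>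
      rename_i a s
      rw [Finset.sum_insert hni]
      have hA : ContDiff ℝ (⊤ : ℕ∞) (A a) := h a (Finset.mem_insert_self a s)
      have hS : ContDiff ℝ (⊤ : ℕ∞) (fun w => ∑ b ∈ s, A b w) :=
        ContDiff.sum fun b hb => h b (Finset.mem_insert_of_mem hb)
      have : pd3 i j l (fun w => A a w + ∑ b ∈ s, A b w) x
          = pd3 i j l (A a) x + pd3 i j l (fun w => ∑ b ∈ s, A b w) x :=
        pd3_add hA hS
      simp only [Finset.sum_insert hni] at *
      rw [this, ih fun b hb => h b (Finset.mem_insert_of_mem hb)]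

lemma contDiff_mon3 (a b c : Fin m) :
    ContDiff ℝ (⊤ : ℕ∞) (fun w : Fin m → ℝ => w a * w b * w c) := by
  fun_prop

lemma pd_mon2 (a b i : Fin m) (v : Fin m → ℝ) :
    pd i (fun w => w a * w b) v = kd a i * v b + kd b i * v a := by
  rw [pd_mul (by fun_prop) (by fun_prop), pd_proj, pd_proj]
  ring

lemma pd_mon3 (a b c i : Fin m) (v : Fin m → ℝ) :
    pd i (fun w => w a * w b * w c) v =
      kd a i * (v b * v c) + kd b i * (v a * v c) + kd c i * (v a * v b) := by
  rw [pd_mul (f := fun w => w a * w b) (by fun_prop) (by fun_prop), pd_mon2, pd_proj]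
  ring

lemma pd3_mon3 (a b c i j l : Fin m) (x : Fin m → ℝ) :
    pd3 i j l (fun w => w a * w b * w c) x =
      kd a l * (kd b j * kd c i + kd c j * kd b i) +
      kd b l * (kd a j * kd c i + kd c j * kd a i) +
      kd c l * (kd a j * kd b i + kd b j * kd a i) := by
  unfold pd3
  have h1 : (fun u => pd l (fun w => w a * w b * w c) u) =
      fun u => kd a l * (u b * u c) + kd b l * (u a * u c) + kd c l * (u a * u b) :=
    funext fun u => pd_mon3 a b c l u
  rw [h1]
  have h2 : (fun v => pd j (fun u =>
      kd a l * (u b * u c) + kd b l * (u a * u c) + kd c l * (u a * u b)) v) =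
      fun v => kd a l * (kd b j * v c + kd c j * v b) +
        kd b l * (kd a j * v c + kd c j * v a) +
        kd c l * (kd a j * v b + kd b j * v a) := by
    funext v
    rw [pd_add (by fun_prop) (by fun_prop), pd_add (by fun_prop) (by fun_prop),
      pd_const_mul (by fun_prop), pd_const_mul (by fun_prop),
      pd_const_mul (by fun_prop), pd_mon2, pd_mon2, pd_mon2]
  rw [h2]
  rw [pd_add (by fun_prop) (by fun_prop), pd_add (by fun_prop) (by fun_prop),
    pd_const_mul (by fun_prop), pd_const_mul (by fun_prop),
    pd_const_mul (by fun_prop),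
    pd_add (by fun_prop) (by fun_prop), pd_add (by fun_prop) (by fun_prop),
    pd_add (by fun_prop) (by fun_prop),
    pd_const_mul (by fun_prop), pd_const_mul (by fun_prop),
    pd_const_mul (by fun_prop), pd_const_mul (by fun_prop),
    pd_const_mul (by fun_prop), pd_const_mul (by fun_prop)]
  simp only [pd_proj]

end pd3lemmas

section interior

variable {n : ℕ}

@[simp] lemma interiorIdx_val (α : Fin n) : (interiorIdx α).val = α.val + 1 := rfl

lemma interiorIdx_ne_zero (α : Fin n) : interiorIdx α ≠ 0 := by
  intro h
  have := congrArg Fin.val h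
  simp at this

lemma interiorIdx_ne_last (α : Fin n) : interiorIdx α ≠ Fin.last (n + 1) := by
  intro h
  have := congrArg Fin.val h
  simp [Fin.val_last] at this
  omega

lemma interiorIdx_inj {α β : Fin n} : interiorIdx α = interiorIdx β ↔ α = β := by
  constructor
  · intro h
    have := congrArg Fin.val h
    simp at this
    exact Fin.ext this
  · rintro rfl; rfl

lemma zero_ne_last : (0 : Fin (n + 2)) ≠ Fin.last (n + 1) := by
  intro h
  have := congrArg Fin.val h
  simp [Fin.val_last] at this

/-- Every index of `Fin (n+2)` is `0`, interior, or last. -/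
lemma index_cases (i : Fin (n + 2)) :
    i = 0 ∨ (∃ α : Fin n, i = interiorIdx α) ∨ i = Fin.last (n + 1) := by
  rcases Nat.eq_zero_or_pos i.val with h | h
  · exact Or.inl (Fin.ext h)
  · rcases Nat.lt_or_ge i.val (n + 1) with h2 | h2
    · refine Or.inr (Or.inl ⟨⟨i.val - 1, by omega⟩, Fin.ext ?_⟩)
      simp; omega
    · refine Or.inr (Or.inr (Fin.ext ?_))
      have := i.isLt
      simp [Fin.val_last]; omega

/-- Sum over `Fin (n+2)` splits into 0, interior, last. -/
lemma sum_split (f : Fin (n + 2) → ℝ) :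
    ∑ x, f x = f 0 + (∑ α : Fin n, f (interiorIdx α)) + f (Fin.last (n + 1)) := by
  rw [Fin.sum_univ_castSucc, Fin.sum_univ_succ]
  rfl

/-- Projection to interior coordinates, as a continuous linear map. -/
noncomputable def proj2 {n : ℕ} : (Fin (n + 2) → ℝ) →L[ℝ] (Fin n → ℝ) :=
  ContinuousLinearMap.pi fun α => ContinuousLinearMap.proj (interiorIdx α)

@[simp] lemma proj2_apply (w : Fin (n + 2) → ℝ) (α : Fin n) :
    proj2 w α = w (interiorIdx α) := rfl

lemma proj2_single_interior (α : Fin n) :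
    proj2 (Pi.single (interiorIdx α) (1 : ℝ)) = Pi.single α 1 := by
  funext β
  simp only [proj2_apply, Pi.single_apply, interiorIdx_inj]

lemma proj2_single_zero : proj2 (Pi.single (0 : Fin (n + 2)) (1 : ℝ)) = 0 := by
  funext β
  simp [Pi.single_apply, interiorIdx_ne_zero β]

lemma proj2_single_last : proj2 (Pi.single (Fin.last (n + 1)) (1 : ℝ)) = 0 := by
  funext β
  simp [Pi.single_apply, interiorIdx_ne_last β]

variable {G : (Fin n → ℝ) → ℝ} {x : Fin (n + 2) → ℝ}

lemma contDiff_comp_proj2 (hG : ContDiff ℝ (⊤ : ℕ∞) G) :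
    ContDiff ℝ (⊤ : ℕ∞) (fun w : Fin (n + 2) → ℝ => G (proj2 w)) :=
  hG.comp proj2.contDiff

lemma pd_comp (hG : DifferentiableAt ℝ G (proj2 x)) (i : Fin (n + 2)) :
    pd i (fun w => G (proj2 w)) x = fderiv ℝ G (proj2 x) (proj2 (Pi.single i 1)) := by
  unfold pd
  have : (fun w => G (proj2 w)) = G ∘ ⇑proj2 := rfl
  rw [this, fderiv_comp x hG proj2.differentiableAt, ContinuousLinearMap.fderiv]
  rfl

lemma pd_comp_interior (hG : DifferentiableAt ℝ G (proj2 x)) (α : Fin n) :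
    pd (interiorIdx α) (fun w => G (proj2 w)) x = pd α G (proj2 x) := by
  rw [pd_comp hG, proj2_single_interior]; rfl

lemma pd_comp_zero (hG : DifferentiableAt ℝ G (proj2 x)) :
    pd 0 (fun w => G (proj2 w)) x = 0 := by
  rw [pd_comp hG, proj2_single_zero]; simp

lemma pd_comp_last (hG : DifferentiableAt ℝ G (proj2 x)) :
    pd (Fin.last (n + 1)) (fun w => G (proj2 w)) x = 0 := by
  rw [pd_comp hG, proj2_single_last]; simp

end interior

section compthird

variable {n : ℕ} {F : (Fin n → ℝ) → ℝ} {x : Fin (n + 2) → ℝ}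

lemma pd3_comp_interior (hF : ContDiff ℝ (⊤ : ℕ∞) F) (α β ε : Fin n) :
    pd3 (interiorIdx α) (interiorIdx β) (interiorIdx ε)
      (fun w => F (proj2 w)) x = pd3 α β ε F (proj2 x) := by
  have hF1 : ContDiff ℝ (⊤ : ℕ∞) (pd ε F) := pd_contDiff hF ε
  have hF2 : ContDiff ℝ (⊤ : ℕ∞) (pd β (pd ε F)) := pd_contDiff hF1 β
  unfold pd3
  have h1 : (fun u => pd (interiorIdx ε) (fun w => F (proj2 w)) u) =
      fun u => (pd ε F) (proj2 u) :=
    funext fun u => pd_comp_interior (hF.differentiable (by simp) _) ε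
  rw [h1]
  have h2 : (fun v => pd (interiorIdx β) (fun u => (pd ε F) (proj2 u)) v) =
      fun v => (pd β (pd ε F)) (proj2 v) :=
    funext fun v => pd_comp_interior (hF1.differentiable (by simp) _) β
  rw [h2]
  exact pd_comp_interior (hF2.differentiable (by simp) _) α

/-- Helper: pd at a non-interior index of a composed function vanishes. -/
lemma pd_comp_bad {G : (Fin n → ℝ) → ℝ} (hG : DifferentiableAt ℝ G (proj2 x))
    {i : Fin (n + 2)} (hi : i = 0 ∨ i = Fin.last (n + 1)) :
    pd i (fun w => G (proj2 w)) x = 0 := by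
  rcases hi with rfl | rfl
  · exact pd_comp_zero hG
  · exact pd_comp_last hG

lemma pd3_comp_bad (hF : ContDiff ℝ (⊤ : ℕ∞) F) {i j l : Fin (n + 2)}
    (h : (i = 0 ∨ i = Fin.last (n + 1)) ∨ (j = 0 ∨ j = Fin.last (n + 1)) ∨
      (l = 0 ∨ l = Fin.last (n + 1))) :
    pd3 i j l (fun w => F (proj2 w)) x = 0 := by
  unfold pd3
  rcases index_cases l with rfl | ⟨ε, rfl⟩ | rfl
  · -- inner pd vanishes identically
    have h1 : (fun u => pd 0 (fun w => F (proj2 w)) u) = fun _ => (0 : ℝ) :=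
      funext fun u => pd_comp_zero (hF.differentiable (by simp) _)
    rw [h1]
    have h2 : (fun v => pd j (fun _ : Fin (n + 2) → ℝ => (0 : ℝ)) v) =
        fun _ => (0 : ℝ) := funext fun v => pd_const 0
    rw [h2, pd_const]
  case inr.inl =>
    -- l interior; so i or j is bad
    have hF1 : ContDiff ℝ (⊤ : ℕ∞) (pd ε F) := pd_contDiff hF ε
    have h1 : (fun u => pd (interiorIdx ε) (fun w => F (proj2 w)) u) =
        fun u => (pd ε F) (proj2 u) :=
      funext fun u => pd_comp_interior (hF.differentiable (by simp) _) ε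
    rw [h1]
    rcases index_cases j with hj | ⟨β, rfl⟩ | hj
    · subst hj
      have h2 : (fun v => pd 0 (fun u => (pd ε F) (proj2 u)) v) =
          fun _ => (0 : ℝ) :=
        funext fun v => pd_comp_zero (hF1.differentiable (by simp) _)
      rw [h2, pd_const]
    · -- j interior, so i bad
      have hF2 : ContDiff ℝ (⊤ : ℕ∞) (pd β (pd ε F)) := pd_contDiff hF1 β
      have h2 : (fun v => pd (interiorIdx β) (fun u => (pd ε F) (proj2 u)) v) =
          fun v => (pd β (pd ε F)) (proj2 v) :=
        funext fun v => pd_comp_interior (hF1.differentiable (by simp) _) β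
      rw [h2]
      have hi : i = 0 ∨ i = Fin.last (n + 1) := by
        rcases h with hi | hj | hl
        · exact hi
        · rcases hj with hj | hj
          · exact absurd hj (interiorIdx_ne_zero β)
          · exact absurd hj (interiorIdx_ne_last β)
        · rcases hl with hl | hl
          · exact absurd hl (interiorIdx_ne_zero ε)
          · exact absurd hl (interiorIdx_ne_last ε)
      exact pd_comp_bad (hF2.differentiable (by simp) _) hi
    · subst hj
      have h2 : (fun v => pd (Fin.last (n + 1)) (fun u => (pd ε F) (proj2 u)) v) =
          fun _ => (0 : ℝ) :=
        funext fun v => pd_comp_last (hF1.differentiable (by simp) _)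
      rw [h2, pd_const]
  · have h1 : (fun u => pd (Fin.last (n + 1)) (fun w => F (proj2 w)) u) =
        fun _ => (0 : ℝ) :=
      funext fun u => pd_comp_last (hF.differentiable (by simp) _)
    rw [h1]
    have h2 : (fun v => pd j (fun _ : Fin (n + 2) → ℝ => (0 : ℝ)) v) =
        fun _ => (0 : ℝ) := funext fun v => pd_const 0
    rw [h2, pd_const]

end compthird

section schwarz

variable {m : ℕ} {f : (Fin m → ℝ) → ℝ} {x : Fin m → ℝ}

lemma pd3_swap12 (hf : ContDiff ℝ (⊤ : ℕ∞) f) (i j l : Fin m) :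
    pd3 i j l f x = pd3 j i l f x :=
  pd_comm (pd_contDiff hf l) i j

lemma pd3_swap23 (hf : ContDiff ℝ (⊤ : ℕ∞) f) (i j l : Fin m) :
    pd3 i j l f x = pd3 i l j f x := by
  unfold pd3
  have h : (fun v => pd j (fun u => pd l f u) v) =
      fun v => pd l (fun u => pd j f u) v :=
    funext fun v => pd_comm hf j l
  rw [h]

lemma pd3_swap13 (hf : ContDiff ℝ (⊤ : ℕ∞) f) (i j l : Fin m) :
    pd3 i j l f x = pd3 l j i f x := by
  rw [pd3_swap12 hf, pd3_swap23 hf, pd3_swap12 hf]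

end schwarz

section exteta

variable {n : ℕ} (M : Matrix (Fin n) (Fin n) ℝ)

@[simp] lemma extEta_00 : extEta M 0 0 = 0 := by simp [extEta]
@[simp] lemma extEta_0L : extEta M 0 (Fin.last (n + 1)) = 1 := by
  simp [extEta, Fin.val_last]
@[simp] lemma extEta_0I (β : Fin n) : extEta M 0 (interiorIdx β) = 0 := by
  have h := β.isLt
  simp [extEta]
  try omega
@[simp] lemma extEta_L0 : extEta M (Fin.last (n + 1)) 0 = 1 := by
  simp [extEta, Fin.val_last]
@[simp] lemma extEta_LL : extEta M (Fin.last (n + 1)) (Fin.last (n + 1)) = 0 := by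
  simp [extEta, Fin.val_last]
@[simp] lemma extEta_LI (β : Fin n) :
    extEta M (Fin.last (n + 1)) (interiorIdx β) = 0 := by
  have h := β.isLt
  simp [extEta, Fin.val_last, interiorIdx_ne_zero]
  try omega
@[simp] lemma extEta_I0 (α : Fin n) : extEta M (interiorIdx α) 0 = 0 := by
  have h := α.isLt
  have h2 : (interiorIdx α).val ≠ 0 := by simp
  have h4 : (interiorIdx α).val ≠ n + 1 := by simp; omega
  simp [extEta, h2, h4]
  omega
@[simp] lemma extEta_IL (α : Fin n) :
    extEta M (interiorIdx α) (Fin.last (n + 1)) = 0 := by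
  have h := α.isLt
  have h2 : (interiorIdx α).val ≠ 0 := by simp
  have h4 : (interiorIdx α).val ≠ n + 1 := by simp; omega
  simp [extEta, h2, h4, Fin.val_last, interiorIdx_ne_zero]
@[simp] lemma extEta_II (α β : Fin n) :
    extEta M (interiorIdx α) (interiorIdx β) = M α β := by
  have hα := α.isLt
  have hβ := β.isLt
  have h1 : (interiorIdx α).val ≠ 0 := by simp
  have h2 : (interiorIdx α).val ≠ n + 1 := by simp; omega
  have h3 : (interiorIdx β).val ≠ 0 := by simp
  have h4 : (interiorIdx β).val ≠ n + 1 := by simp; omega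
  simp only [extEta, Matrix.of_apply, if_neg h1, if_neg h2, dif_neg h3, dif_neg h4,
    dif_neg h1, dif_neg h2]
  congr 1 <;> exact Fin.ext (by simp)

variable {η : Matrix (Fin n) (Fin n) ℝ}

lemma extEta_mul_inv (hηinv : IsUnit η.det) :
    extEta η * extEta η⁻¹ = 1 := by
  have hmul : ∀ α γ : Fin n, ∑ β, η α β * η⁻¹ β γ = if α = γ then 1 else 0 := by
    intro α γ
    have := Matrix.mul_nonsing_inv η hηinv
    have h2 := congrFun (congrFun this α) γ
    rw [Matrix.mul_apply] at h2
    rw [h2, Matrix.one_apply]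
  ext i j
  rw [Matrix.mul_apply, sum_split]
  rcases index_cases i with rfl | ⟨α, rfl⟩ | rfl <;>
    rcases index_cases j with rfl | ⟨β, rfl⟩ | rfl <;>
      simp [Matrix.one_apply, interiorIdx_ne_zero, interiorIdx_ne_last,
        zero_ne_last, (interiorIdx_ne_zero _).symm, (interiorIdx_ne_last _).symm,
        zero_ne_last.symm, interiorIdx_inj, hmul]

lemma extEta_inv (hηinv : IsUnit η.det) : (extEta η)⁻¹ = extEta η⁻¹ :=
  Matrix.inv_eq_right_inv (extEta_mul_inv hηinv)

end exteta

section master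

variable {n : ℕ} {η : Matrix (Fin n) (Fin n) ℝ} {F : (Fin n → ℝ) → ℝ}
  {x : Fin (n + 2) → ℝ}

lemma kd_self {m : ℕ} (a : Fin m) : kd a a = 1 := if_pos rfl
lemma kd_ne {m : ℕ} {a b : Fin m} (h : a ≠ b) : kd a b = 0 := if_neg h

/-- The interior quadratic pairing. -/
noncomputable def etaPair {n : ℕ} (η : Matrix (Fin n) (Fin n) ℝ)
    (x y : Fin (n + 2)) : ℝ :=
  ∑ α, ∑ β, η α β * (kd (interiorIdx α) x * kd (interiorIdx β) y)

lemma etaPair_II (γ δ : Fin n) :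
    etaPair η (interiorIdx γ) (interiorIdx δ) = η γ δ := by
  unfold etaPair kd
  simp [interiorIdx_inj, mul_ite, ite_mul, Finset.sum_ite_eq', Finset.mem_univ]

lemma etaPair_left0 (y : Fin (n + 2)) : etaPair η 0 y = 0 := by
  simp [etaPair, kd, fun α : Fin n => (interiorIdx_ne_zero α : interiorIdx α ≠ 0)]

lemma etaPair_leftL (y : Fin (n + 2)) : etaPair η (Fin.last (n + 1)) y = 0 := by
  simp [etaPair, kd, fun α : Fin n => (interiorIdx_ne_last α)]

lemma etaPair_right0 (y : Fin (n + 2)) : etaPair η y 0 = 0 := by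
  simp [etaPair, kd, fun α : Fin n => (interiorIdx_ne_zero α : interiorIdx α ≠ 0)]

lemma etaPair_rightL (y : Fin (n + 2)) : etaPair η y (Fin.last (n + 1)) = 0 := by
  simp [etaPair, kd, fun α : Fin n => (interiorIdx_ne_last α)]

lemma extF_eq : extF η F = fun w =>
    (1 / 2) * (w 0 * w 0 * w (Fin.last (n + 1))) +
      (∑ α, ∑ β, (η α β / 2) * (w 0 * w (interiorIdx α) * w (interiorIdx β))) +
      F (proj2 w) := by
  funext w
  unfold extF
  congr 1
  congr 1
  · ring
  · rw [Finset.mul_sum]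
    refine Finset.sum_congr rfl fun α _ => ?_
    rw [Finset.mul_sum]
    refine Finset.sum_congr rfl fun β _ => ?_
    ring

lemma contDiff_extF (hF : ContDiff ℝ (⊤ : ℕ∞) F) : ContDiff ℝ (⊤ : ℕ∞) (extF η F) := by
  rw [extF_eq]
  refine ContDiff.add (ContDiff.add ?_ ?_) (contDiff_comp_proj2 hF)
  · fun_prop
  · exact ContDiff.sum fun α _ => ContDiff.sum fun β _ => by fun_prop

/-- Master formula for the third partial derivatives of the extended potential. -/
lemma pd3_extF (hF : ContDiff ℝ (⊤ : ℕ∞) F) (i j l : Fin (n + 2)) :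
    pd3 i j l (extF η F) x =
      (kd 0 l * (kd 0 j * kd (Fin.last (n + 1)) i) +
        kd 0 l * (kd (Fin.last (n + 1)) j * kd 0 i) +
        kd (Fin.last (n + 1)) l * (kd 0 j * kd 0 i)) +
      (1 / 2) * (kd 0 l * (etaPair η j i + etaPair η i j) +
        kd 0 j * (etaPair η l i + etaPair η i l) +
        kd 0 i * (etaPair η l j + etaPair η j l)) +
      pd3 i j l (fun w => F (proj2 w)) x := by
  rw [extF_eq]
  have h1 : ContDiff ℝ (⊤ : ℕ∞) (fun w : Fin (n + 2) → ℝ =>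
      (1 / 2 : ℝ) * (w 0 * w 0 * w (Fin.last (n + 1)))) := by fun_prop
  have h2 : ContDiff ℝ (⊤ : ℕ∞) (fun w : Fin (n + 2) → ℝ =>
      ∑ α, ∑ β, (η α β / 2) * (w 0 * w (interiorIdx α) * w (interiorIdx β))) :=
    ContDiff.sum fun α _ => ContDiff.sum fun β _ => by fun_prop
  have h3 : ContDiff ℝ (⊤ : ℕ∞) (fun w : Fin (n + 2) → ℝ => F (proj2 w)) :=
    contDiff_comp_proj2 hF
  rw [pd3_add (h1.add h2) h3, pd3_add h1 h2]
  congr 1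
  congr 1
  · -- cubic corner term
    rw [pd3_const_mul (by fun_prop : ContDiff ℝ (⊤ : ℕ∞) (fun w : Fin (n + 2) → ℝ =>
        w 0 * w 0 * w (Fin.last (n + 1)))), pd3_mon3]
    ring
  · -- quadratic interior term
    rw [pd3_sum Finset.univ _ (fun α _ => ContDiff.sum fun β _ => by fun_prop)]
    have : ∀ α : Fin n, pd3 i j l (fun w =>
        ∑ β, (η α β / 2) * (w 0 * w (interiorIdx α) * w (interiorIdx β))) x =
        ∑ β, (η α β / 2) * pd3 i j l
          (fun w => w 0 * w (interiorIdx α) * w (interiorIdx β)) x := by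
      intro α
      rw [pd3_sum Finset.univ _ (fun β _ => by fun_prop)]
      exact Finset.sum_congr rfl fun β _ => pd3_const_mul (by fun_prop) _
    rw [Finset.sum_congr rfl fun α _ => this α]
    have step : ∀ α β : Fin n, (η α β / 2) * pd3 i j l
        (fun w => w 0 * w (interiorIdx α) * w (interiorIdx β)) x =
        (1/2) * (kd 0 l * (η α β * (kd (interiorIdx α) j * kd (interiorIdx β) i)))
      + (1/2) * (kd 0 l * (η α β * (kd (interiorIdx α) i * kd (interiorIdx β) j)))
      + (1/2) * (kd 0 j * (η α β * (kd (interiorIdx α) l * kd (interiorIdx β) i)))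
      + (1/2) * (kd 0 j * (η α β * (kd (interiorIdx α) i * kd (interiorIdx β) l)))
      + (1/2) * (kd 0 i * (η α β * (kd (interiorIdx α) l * kd (interiorIdx β) j)))
      + (1/2) * (kd 0 i * (η α β * (kd (interiorIdx α) j * kd (interiorIdx β) l))) := by
      intro α β; rw [pd3_mon3]; ring
    rw [Finset.sum_congr rfl fun α _ => Finset.sum_congr rfl fun β _ => step α β]
    simp only [Finset.sum_add_distrib, ← Finset.mul_sum]
    simp only [etaPair]
    ring

end master

section closed

variable {n : ℕ} {η : Matrix (Fin n) (Fin n) ℝ} {F : (Fin n → ℝ) → ℝ}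
  {x : Fin (n + 2) → ℝ}

lemma structConst_eq_pd3 {m : ℕ} (M : Matrix (Fin m) (Fin m) ℝ)
    (f : (Fin m → ℝ) → ℝ) (γ α β : Fin m) (v : Fin m → ℝ) :
    structConst M f γ α β v = ∑ ε, M⁻¹ γ ε * pd3 α β ε f v := rfl

-- kd evaluation lemmas
@[simp] lemma kd_0L : kd (0 : Fin (n + 2)) (Fin.last (n + 1)) = 0 :=
  kd_ne zero_ne_last
@[simp] lemma kd_L0 : kd (Fin.last (n + 1)) (0 : Fin (n + 2)) = 0 :=
  kd_ne zero_ne_last.symm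
@[simp] lemma kd_00 : kd (0 : Fin (n + 2)) 0 = 1 := kd_self 0
@[simp] lemma kd_LL : kd (Fin.last (n + 1)) (Fin.last (n + 1)) = 1 := kd_self _
@[simp] lemma kd_0I (β : Fin n) : kd (0 : Fin (n + 2)) (interiorIdx β) = 0 :=
  kd_ne (Ne.symm (interiorIdx_ne_zero β))
@[simp] lemma kd_I0 (α : Fin n) : kd (interiorIdx α) (0 : Fin (n + 2)) = 0 :=
  kd_ne (interiorIdx_ne_zero α)
@[simp] lemma kd_LI (β : Fin n) : kd (Fin.last (n + 1)) (interiorIdx β) = 0 :=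
  kd_ne (Ne.symm (interiorIdx_ne_last β))
@[simp] lemma kd_IL (α : Fin n) : kd (interiorIdx α) (Fin.last (n + 1)) = 0 :=
  kd_ne (interiorIdx_ne_last α)

lemma structConst_ext (hηinv : IsUnit η.det) (k i j : Fin (n + 2)) :
    structConst (extEta η) (extF η F) k i j x =
      ∑ e, extEta η⁻¹ k e * pd3 i j e (extF η F) x := by
  rw [structConst_eq_pd3, extEta_inv hηinv]

lemma ct_zero (hF : ContDiff ℝ (⊤ : ℕ∞) F) (hηinv : IsUnit η.det) (i j : Fin (n + 2)) :
    structConst (extEta η) (extF η F) 0 i j x = kd 0 i * kd 0 j := by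
  rw [structConst_ext hηinv, sum_split]
  simp only [extEta_00, extEta_0I, extEta_0L, zero_mul, one_mul,
    Finset.sum_const_zero, add_zero, zero_add]
  rw [pd3_extF hF, pd3_comp_bad hF (Or.inr (Or.inr (Or.inr rfl)))]
  simp only [kd_0L, kd_LL, etaPair_leftL, etaPair_rightL]
  ring

lemma ct_last (hF : ContDiff ℝ (⊤ : ℕ∞) F) (hηinv : IsUnit η.det) (i j : Fin (n + 2)) :
    structConst (extEta η) (extF η F) (Fin.last (n + 1)) i j x =
      kd 0 j * kd (Fin.last (n + 1)) i + kd (Fin.last (n + 1)) j * kd 0 i +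
        (1 / 2) * (etaPair η j i + etaPair η i j) := by
  rw [structConst_ext hηinv, sum_split]
  simp only [extEta_L0, extEta_LI, extEta_LL, zero_mul, one_mul,
    Finset.sum_const_zero, add_zero, zero_add]
  rw [pd3_extF hF, pd3_comp_bad hF (Or.inr (Or.inr (Or.inl rfl)))]
  simp only [kd_00, kd_L0, etaPair_left0, etaPair_right0]
  ring

lemma ct_int (hF : ContDiff ℝ (⊤ : ℕ∞) F) (hηinv : IsUnit η.det) (δ : Fin n)
    (i j : Fin (n + 2)) :
    structConst (extEta η) (extF η F) (interiorIdx δ) i j x =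
      ∑ ε, η⁻¹ δ ε *
        ((1 / 2) * (kd 0 j * (etaPair η (interiorIdx ε) i + etaPair η i (interiorIdx ε)) +
          kd 0 i * (etaPair η (interiorIdx ε) j + etaPair η j (interiorIdx ε))) +
          pd3 i j (interiorIdx ε) (fun w => F (proj2 w)) x) := by
  rw [structConst_ext hηinv, sum_split]
  simp only [extEta_I0, extEta_II, extEta_IL, zero_mul,
    Finset.sum_const_zero, add_zero, zero_add]
  refine Finset.sum_congr rfl fun ε _ => ?_
  rw [pd3_extF hF]
  simp only [kd_0I, kd_LI]
  ring

lemma ct_int_II (hF : ContDiff ℝ (⊤ : ℕ∞) F) (hηinv : IsUnit η.det) (δ α β : Fin n) :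
    structConst (extEta η) (extF η F) (interiorIdx δ) (interiorIdx α)
      (interiorIdx β) x = structConst η F δ α β (proj2 x) := by
  rw [ct_int hF hηinv, structConst_eq_pd3]
  refine Finset.sum_congr rfl fun ε _ => ?_
  rw [pd3_comp_interior hF]
  simp only [kd_0I, zero_mul, mul_zero, add_zero, zero_add]

lemma ct_symm (hF : ContDiff ℝ (⊤ : ℕ∞) F) (k i j : Fin (n + 2)) :
    structConst (extEta η) (extF η F) k i j x =
      structConst (extEta η) (extF η F) k j i x := by
  rw [structConst_eq_pd3, structConst_eq_pd3]
  refine Finset.sum_congr rfl fun ε _ => ?_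
  rw [pd3_swap12 (contDiff_extF hF)]

lemma ct_Lmid (hF : ContDiff ℝ (⊤ : ℕ∞) F) (hηinv : IsUnit η.det) (k j : Fin (n + 2)) :
    structConst (extEta η) (extF η F) k (Fin.last (n + 1)) j x =
      (if k = Fin.last (n + 1) then 1 else 0) * kd 0 j := by
  rcases index_cases k with rfl | ⟨δ, rfl⟩ | rfl
  · rw [ct_zero hF hηinv]
    simp [zero_ne_last]
  · rw [ct_int hF hηinv, if_neg (interiorIdx_ne_last δ), zero_mul]
    refine Finset.sum_eq_zero fun ε _ => ?_
    rw [pd3_comp_bad hF (Or.inl (Or.inr rfl)), etaPair_leftL, etaPair_rightL]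
    simp
  · rw [ct_last hF hηinv]
    simp [etaPair_leftL, etaPair_rightL]

lemma ct_unit (hF : ContDiff ℝ (⊤ : ℕ∞) F) (hηsym : η.IsSymm) (hηinv : IsUnit η.det)
    (j k : Fin (n + 2)) :
    structConst (extEta η) (extF η F) k 0 j x = if j = k then 1 else 0 := by
  have hwwinv : ∀ δ γ : Fin n, ∑ ε, η⁻¹ δ ε * η ε γ = if δ = γ then 1 else 0 := by
    intro δ γ
    have h := congrFun (congrFun (Matrix.nonsing_inv_mul η hηinv) δ) γ
    rw [Matrix.mul_apply] at h
    rw [h, Matrix.one_apply]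
  rcases index_cases k with rfl | ⟨δ, rfl⟩ | rfl
  · rw [ct_zero hF hηinv]
    simp [kd, eq_comm]
  · rw [ct_int hF hηinv]
    rcases index_cases j with rfl | ⟨γ, rfl⟩ | rfl
    · rw [if_neg (Ne.symm (interiorIdx_ne_zero δ))]
      refine Finset.sum_eq_zero fun ε _ => ?_
      rw [pd3_comp_bad hF (Or.inl (Or.inl rfl)), etaPair_left0, etaPair_right0]
      simp
    · have : ∀ ε : Fin n,
          η⁻¹ δ ε * ((1 / 2) *
            (kd (0 : Fin (n + 2)) (interiorIdx γ) *
              (etaPair η (interiorIdx ε) (0 : Fin (n + 2)) +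
                etaPair η (0 : Fin (n + 2)) (interiorIdx ε)) +
            kd (0 : Fin (n + 2)) (0 : Fin (n + 2)) *
              (etaPair η (interiorIdx ε) (interiorIdx γ) +
              etaPair η (interiorIdx γ) (interiorIdx ε))) +
            pd3 (0 : Fin (n + 2)) (interiorIdx γ) (interiorIdx ε)
              (fun w => F (proj2 w)) x) =
          η⁻¹ δ ε * η ε γ := by
        intro ε
        rw [pd3_comp_bad hF (Or.inl (Or.inl rfl)), etaPair_II, etaPair_II,
          etaPair_left0, etaPair_right0]
        have hsym : η γ ε = η ε γ := by
          have := congrFun (congrFun hηsym.eq ε) γ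
          simpa [Matrix.transpose_apply] using this
        rw [hsym]
        simp only [kd_0I, kd_00]
        ring
      rw [Finset.sum_congr rfl fun ε _ => this ε, hwwinv δ γ]
      by_cases h : γ = δ
      · subst h; simp
      · rw [if_neg (fun hh => h (interiorIdx_inj.mp hh)), if_neg (Ne.symm h)]
    · rw [if_neg (Ne.symm (interiorIdx_ne_last δ))]
      refine Finset.sum_eq_zero fun ε _ => ?_
      rw [pd3_comp_bad hF (Or.inl (Or.inl rfl)), etaPair_leftL, etaPair_rightL,
        etaPair_left0, etaPair_right0]
      simp
  · rw [ct_last hF hηinv]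
    simp only [kd_00, kd_L0, etaPair_left0, etaPair_right0, mul_one, mul_zero,
      add_zero, zero_add, zero_mul]
    rw [kd]
    simp [eq_comm]

end closed

section base

variable {n : ℕ} {η : Matrix (Fin n) (Fin n) ℝ} {F : (Fin n → ℝ) → ℝ}

lemma sum_eta_sc (hηinv : IsUnit η.det) (v : Fin n → ℝ) (γ α β : Fin n) :
    ∑ ξ, η γ ξ * structConst η F ξ α β v = pd3 α β γ F v := by
  simp only [structConst_eq_pd3, Finset.mul_sum]
  rw [Finset.sum_comm]
  have step : ∀ ε : Fin n, (∑ ξ, η γ ξ * (η⁻¹ ξ ε * pd3 α β ε F v)) =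
      (if γ = ε then 1 else 0) * pd3 α β ε F v := by
    intro ε
    rw [Finset.sum_congr rfl fun ξ _ => (mul_assoc (η γ ξ) (η⁻¹ ξ ε) _).symm,
      ← Finset.sum_mul]
    have h := congrFun (congrFun (Matrix.mul_nonsing_inv η hηinv) γ) ε
    rw [Matrix.mul_apply] at h
    rw [h, Matrix.one_apply]
  rw [Finset.sum_congr rfl fun ε _ => step ε]
  simp

end base

/-- If the structure constants of a smooth potential `F` with respect to a constant symmetric
invertible metric `η` satisfy the WDVV associativity equations, then the structure constants
of the Mironov–Taimanov extension `F̃` with respect to `η̃` also satisfy WDVV, and moreover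
`c̃^k_{0j} = δ^k_j`, so `∂/∂v⁰` is the unit of the extended multiplication. -/
theorem extension_satisfies_WDVV {n : ℕ} (F : (Fin n → ℝ) → ℝ) (hF : ContDiff ℝ (⊤ : ℕ∞) F)
    (η : Matrix (Fin n) (Fin n) ℝ) (hηsym : η.IsSymm) (hηinv : IsUnit η.det)
    (hWDVV : ∀ (v : Fin n → ℝ) (α β γ δ : Fin n),
      ∑ ξ, structConst η F ξ α β v * structConst η F δ ξ γ v =
        ∑ ξ, structConst η F ξ γ β v * structConst η F δ ξ α v) :
    (∀ (w : Fin (n + 2) → ℝ) (i j k l : Fin (n + 2)),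
      ∑ x, structConst (extEta η) (extF η F) x i j w *
          structConst (extEta η) (extF η F) l x k w =
        ∑ x, structConst (extEta η) (extF η F) x k j w *
          structConst (extEta η) (extF η F) l x i w) ∧
    (∀ (w : Fin (n + 2) → ℝ) (j k : Fin (n + 2)),
      structConst (extEta η) (extF η F) k 0 j w = if j = k then 1 else 0) := by
  refine ⟨?_, fun w j k => ct_unit hF hηsym hηinv j k⟩
  intro w i j k l
  -- local abbreviation facts
  have hu : ∀ a b : Fin (n + 2),
      structConst (extEta η) (extF η F) b 0 a w = if a = b then 1 else 0 :=
    fun a b => ct_unit hF hηsym hηinv a b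
  have hsym : ∀ a b c : Fin (n + 2),
      structConst (extEta η) (extF η F) a b c w =
        structConst (extEta η) (extF η F) a c b w :=
    fun a b c => ct_symm hF a b c
  have h0 : ∀ a b : Fin (n + 2),
      structConst (extEta η) (extF η F) 0 a b w = kd 0 a * kd 0 b :=
    fun a b => ct_zero hF hηinv a b
  have hLm : ∀ a b : Fin (n + 2),
      structConst (extEta η) (extF η F) a (Fin.last (n + 1)) b w =
        (if a = Fin.last (n + 1) then 1 else 0) * kd 0 b :=
    fun a b => ct_Lmid hF hηinv a b
  have hLast : ∀ a b : Fin (n + 2),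
      structConst (extEta η) (extF η F) (Fin.last (n + 1)) a b w =
        kd 0 b * kd (Fin.last (n + 1)) a + kd (Fin.last (n + 1)) b * kd 0 a +
          (1 / 2) * (etaPair η b a + etaPair η a b) :=
    fun a b => ct_last hF hηinv a b
  -- delta-sum helpers
  have key0 : ∀ a b l' : Fin (n + 2),
      ∑ x, structConst (extEta η) (extF η F) x 0 a w *
        structConst (extEta η) (extF η F) l' x b w =
      structConst (extEta η) (extF η F) l' a b w := by
    intro a b l'
    have hd : ∑ x, (if a = x then 1 else 0) *
        structConst (extEta η) (extF η F) l' x b w =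
        structConst (extEta η) (extF η F) l' a b w := by simp
    rw [← hd]
    exact Finset.sum_congr rfl fun x _ => by rw [hu]
  have key0' : ∀ a b l' : Fin (n + 2),
      ∑ x, structConst (extEta η) (extF η F) x a b w *
        structConst (extEta η) (extF η F) l' x 0 w =
      structConst (extEta η) (extF η F) l' a b w := by
    intro a b l'
    have hd : ∑ x, structConst (extEta η) (extF η F) x a b w *
        (if x = l' then 1 else 0) =
        structConst (extEta η) (extF η F) l' a b w := by simp
    rw [← hd]
    exact Finset.sum_congr rfl fun x _ => by rw [hsym l' x 0, hu]
  have keyL : ∀ a b l' : Fin (n + 2),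
      ∑ x, structConst (extEta η) (extF η F) x (Fin.last (n + 1)) a w *
        structConst (extEta η) (extF η F) l' x b w =
      kd 0 a * ((if l' = Fin.last (n + 1) then 1 else 0) * kd 0 b) := by
    intro a b l'
    have step : ∀ x : Fin (n + 2),
        structConst (extEta η) (extF η F) x (Fin.last (n + 1)) a w *
          structConst (extEta η) (extF η F) l' x b w =
        (if x = Fin.last (n + 1) then
          kd 0 a * structConst (extEta η) (extF η F) l' x b w else 0) := by
      intro x
      rw [hLm]
      by_cases h : x = Fin.last (n + 1)
      · rw [if_pos h, if_pos h]; ring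
      · rw [if_neg h, if_neg h]; ring
    rw [Finset.sum_congr rfl fun x _ => step x, Finset.sum_ite_eq' Finset.univ]
    simp only [Finset.mem_univ, if_pos]
    rw [hLm]
  have keyR : ∀ a b l' : Fin (n + 2),
      ∑ x, structConst (extEta η) (extF η F) x a b w *
        structConst (extEta η) (extF η F) l' x (Fin.last (n + 1)) w =
      (if l' = Fin.last (n + 1) then 1 else 0) *
        (kd 0 a * kd 0 b) := by
    intro a b l'
    have step : ∀ x : Fin (n + 2),
        structConst (extEta η) (extF η F) x a b w *
          structConst (extEta η) (extF η F) l' x (Fin.last (n + 1)) w =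
        (if 0 = x then structConst (extEta η) (extF η F) x a b w *
          (if l' = Fin.last (n + 1) then 1 else 0) else 0) := by
      intro x
      rw [hsym l' x (Fin.last (n + 1)), hLm]
      by_cases h : (0 : Fin (n + 2)) = x
      · rw [if_pos h, ← h, kd_00]; ring
      · rw [if_neg h, kd_ne h, mul_zero, mul_zero]
    rw [Finset.sum_congr rfl fun x _ => step x, Finset.sum_ite_eq Finset.univ]
    simp only [Finset.mem_univ, if_pos]
    rw [h0]
    ring
  rcases index_cases i with rfl | ⟨α, rfl⟩ | rfl
  · -- i = 0
    rw [key0 j k l, key0' k j l]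
    exact hsym l j k
  case inr.inl =>
    rcases index_cases k with rfl | ⟨γ, rfl⟩ | rfl
    · -- k = 0
      rw [key0' (interiorIdx α) j l, key0 j (interiorIdx α) l]
      exact hsym l (interiorIdx α) j
    case inr.inl =>
      rcases index_cases j with rfl | ⟨β, rfl⟩ | rfl
      · -- j = 0
        have e1 : ∑ x, structConst (extEta η) (extF η F) x (interiorIdx α) 0 w *
            structConst (extEta η) (extF η F) l x (interiorIdx γ) w =
            structConst (extEta η) (extF η F) l (interiorIdx α) (interiorIdx γ) w := by
          rw [Finset.sum_congr rfl fun x _ => by rw [hsym x (interiorIdx α) 0]]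
          exact key0 (interiorIdx α) (interiorIdx γ) l
        have e2 : ∑ x, structConst (extEta η) (extF η F) x (interiorIdx γ) 0 w *
            structConst (extEta η) (extF η F) l x (interiorIdx α) w =
            structConst (extEta η) (extF η F) l (interiorIdx γ) (interiorIdx α) w := by
          rw [Finset.sum_congr rfl fun x _ => by rw [hsym x (interiorIdx γ) 0]]
          exact key0 (interiorIdx γ) (interiorIdx α) l
        rw [e1, e2]
        exact hsym l (interiorIdx α) (interiorIdx γ)
      case inr.inl =>
        -- all interior: the essential case
        rcases index_cases l with rfl | ⟨δ, rfl⟩ | rfl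
        · -- l = 0
          rw [Finset.sum_eq_zero fun x _ => by
              rw [h0, kd_0I, mul_zero, mul_zero],
            Finset.sum_eq_zero fun x _ => by
              rw [h0, kd_0I, mul_zero, mul_zero]]
        case inr.inl =>
          -- l interior: base WDVV
          have hint : ∀ α' β' γ' : Fin n,
              ∑ x, structConst (extEta η) (extF η F) x (interiorIdx α') (interiorIdx β') w *
                structConst (extEta η) (extF η F) (interiorIdx δ) x (interiorIdx γ') w =
              ∑ ξ, structConst η F ξ α' β' (proj2 w) *
                structConst η F δ ξ γ' (proj2 w) := by
            intro α' β' γ'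
            rw [sum_split]
            rw [h0, kd_0I, zero_mul, zero_mul, hLm, if_neg (interiorIdx_ne_last δ),
              zero_mul, mul_zero, add_zero, zero_add]
            exact Finset.sum_congr rfl fun ξ _ => by
              rw [ct_int_II hF hηinv, ct_int_II hF hηinv]
          rw [hint α β γ, hint γ β α]
          exact hWDVV (proj2 w) α β γ δ
        · -- l = last
          have hint : ∀ α' β' γ' : Fin n,
              ∑ x, structConst (extEta η) (extF η F) x (interiorIdx α') (interiorIdx β') w *
                structConst (extEta η) (extF η F) (Fin.last (n + 1)) x (interiorIdx γ') w =
              pd3 α' β' γ' F (proj2 w) := by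
            intro α' β' γ'
            rw [sum_split]
            rw [h0, kd_0I, zero_mul, zero_mul, hLm, if_pos rfl, kd_0I, mul_zero,
              mul_zero, add_zero, zero_add]
            have step : ∀ ξ : Fin n,
                structConst (extEta η) (extF η F) (interiorIdx ξ)
                    (interiorIdx α') (interiorIdx β') w *
                  structConst (extEta η) (extF η F) (Fin.last (n + 1))
                    (interiorIdx ξ) (interiorIdx γ') w =
                η γ' ξ * structConst η F ξ α' β' (proj2 w) := by
              intro ξ
              rw [ct_int_II hF hηinv, hLast, kd_0I, kd_0I, kd_LI, kd_LI,
                etaPair_II, etaPair_II]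
              have hs : η ξ γ' = η γ' ξ := by
                have := congrFun (congrFun hηsym.eq γ') ξ
                simpa [Matrix.transpose_apply] using this
              rw [hs]
              ring
            rw [Finset.sum_congr rfl fun ξ _ => step ξ]
            exact sum_eta_sc hηinv (proj2 w) γ' α' β'
          rw [hint α β γ, hint γ β α]
          exact pd3_swap13 hF α β γ
      · -- j = last
        have e1 : ∑ x, structConst (extEta η) (extF η F) x (interiorIdx α)
            (Fin.last (n + 1)) w * structConst (extEta η) (extF η F) l x
            (interiorIdx γ) w =
            kd 0 (interiorIdx α) * ((if l = Fin.last (n + 1) then 1 else 0) *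
              kd 0 (interiorIdx γ)) := by
          rw [Finset.sum_congr rfl fun x _ => by
            rw [hsym x (interiorIdx α) (Fin.last (n + 1))]]
          exact keyL (interiorIdx α) (interiorIdx γ) l
        have e2 : ∑ x, structConst (extEta η) (extF η F) x (interiorIdx γ)
            (Fin.last (n + 1)) w * structConst (extEta η) (extF η F) l x
            (interiorIdx α) w =
            kd 0 (interiorIdx γ) * ((if l = Fin.last (n + 1) then 1 else 0) *
              kd 0 (interiorIdx α)) := by
          rw [Finset.sum_congr rfl fun x _ => by
            rw [hsym x (interiorIdx γ) (Fin.last (n + 1))]]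
          exact keyL (interiorIdx γ) (interiorIdx α) l
        rw [e1, e2]
        ring
    · -- k = last
      rw [keyR (interiorIdx α) j l, keyL j (interiorIdx α) l]
      ring
  · -- i = last
    rw [keyL j k l, keyR k j l]
    ring
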